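/- arXiv:1307.0490 — 2 statements merged into one kernel-verified Lean document; each statement's English description precedes it below -/
import Mathlib

section
/- Let z ∈ ℝ^n with Σ_i z_i = 0, σ a permutation with z_{σ(1)} ≤ ... ≤ z_{σ(n)}, and c ∈ ℝ^n with Σ_i c_i = 0. If Σ_{i=1}^j c_{σ(i)} ≥ 0 for all j ∈ {1,...,n−1}, then Σ_{i=1}^n z_i c_i ≤ 0. -/
/-! Abel summation: with `B j` the partial sums of `c ∘ σ`, which vanish at `j = n + 1`,
`∑ i, z i * c i = -∑ i < n, (z (σ (i + 1)) - z (σ i)) * B (i + 1)`, and every term of the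
right-hand sum is a product of two nonnegative factors. -/

open Finset

theorem sum_range_mul_nonpos_of_partial_sums_nonneg {R : Type*} [CommRing R] [LinearOrder R]
    [IsStrictOrderedRing R] (a b : ℕ → R) (n : ℕ)
    (ha : ∀ i < n, a i ≤ a (i + 1))
    (hb : ∀ j, 1 ≤ j → j ≤ n → 0 ≤ ∑ i ∈ range j, b i)
    (hsum : ∑ i ∈ range (n + 1), b i = 0) :
    ∑ i ∈ range (n + 1), a i * b i ≤ 0 := by
  have hparts := sum_range_by_parts a b (n + 1)
  simp only [smul_eq_mul, Nat.add_sub_cancel, hsum, mul_zero, zero_sub] at hparts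
  rw [hparts, neg_nonpos]
  refine sum_nonneg fun i hi => mul_nonneg ?_ (hb (i + 1) (by omega) (by simp at hi; omega))
  exact sub_nonneg.2 (ha i (mem_range.1 hi))

theorem Fin.sum_filter_val_lt {M : Type*} [AddCommMonoid M] {n j : ℕ} (hj : j ≤ n) (f : ℕ → M) :
    ∑ i ∈ univ.filter (fun i : Fin n => (i : ℕ) < j), f i = ∑ i ∈ range j, f i := by
  rw [sum_filter, Fin.sum_univ_eq_sum_range (fun i => if i < j then f i else 0), ← sum_filter]
  congr 1
  ext i; simp; omega

open Fin.NatCast in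
theorem stmt3_general (n : ℕ) (z c : Fin (n+1) → ℝ)
    (hc : ∑ i, c i = 0)
    (σ : Equiv.Perm (Fin (n+1))) (hσ : Monotone (z ∘ σ))
    (hpos : ∀ j : ℕ, 1 ≤ j → j ≤ n →
      0 ≤ ∑ i ∈ Finset.univ.filter (fun i : Fin (n+1) => (i : ℕ) < j), c (σ i)) :
    ∑ i, z i * c i ≤ 0 := by
  set a : ℕ → ℝ := fun k => z (σ k)
  set b : ℕ → ℝ := fun k => c (σ k)
  have hab : ∑ i, z i * c i = ∑ i ∈ range (n + 1), a i * b i := by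
    rw [← Equiv.sum_comp σ, ← Fin.sum_univ_eq_sum_range]
    simp [a, b]
  rw [hab]
  refine sum_range_mul_nonpos_of_partial_sums_nonneg a b n (fun i hi => hσ ?_)
    (fun j hj hjn => ?_) ?_
  · exact (Fin.natCast_le_natCast (by omega) (by omega)).2 (Nat.le_succ i)
  · rw [← Fin.sum_filter_val_lt (n := n + 1) (by omega) b]
    simpa [b] using hpos j hj hjn
  · rw [← Fin.sum_univ_eq_sum_range]
    simpa [b, Equiv.sum_comp σ c] using hc

theorem stmt3 (n : ℕ) (z c : Fin (n+1) → ℝ)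
    (hz : ∑ i, z i = 0) (hc : ∑ i, c i = 0)
    (σ : Equiv.Perm (Fin (n+1))) (hσ : Monotone (z ∘ σ))
    (hpos : ∀ j : ℕ, 1 ≤ j → j ≤ n →
      0 ≤ ∑ i ∈ Finset.univ.filter (fun i : Fin (n+1) => (i : ℕ) < j), c (σ i)) :
    ∑ i, z i * c i ≤ 0 :=
  stmt3_general n z c hc σ hσ hpos
end

section
/- Let a^+ : [0,∞) → ℝ be bounded, continuous with a^+(0) > 0. Let δ : (0, ε̄) → (0, δ̄) where δ̄ = 1 ∧ inf{δ ≥ 0 : a^+(δ) = 0} > 0, and suppose ε/δ(ε) → 0 as ε → 0. Then ∫_0^{δ(ε)} exp(−(1/(2ε)) ∫_0^y a^+(x) dx) dy is asymptotically equivalent to 2ε/a^+(0) as ε → 0, i.e. the ratio of the two quantities converges to 1. -/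
/-!
Write `A y = ∫₀^y a` and `t = 1/(2ε)`. Given `η > 0`, on a short interval `[0, r]` the function
`a` stays within `η` of `a 0`, so there `(a 0 - η) y ≤ A y ≤ (a 0 + η) y`, and the integral over
`[0, min r δ]` is squeezed between the explicit integrals of `exp (-t (a 0 ± η) y)`: it lies
between `(1 - exp (-t (a 0 + η) min r δ)) / (t (a 0 + η))` and `1 / (t (a 0 - η))`. Because
`ε / δ(ε) → 0`, `t · min r δ → ∞` and the exponential in the lower bound vanishes. On `[r, δ]`
positivity of `a` gives `A y ≥ A r > 0`, so that piece is `O(exp (-t A r)) = o(1/t)`.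
Hence the ratio is eventually within `O(η)` of `1`, and `η` is arbitrary.
-/

open Real Filter Set Topology intervalIntegral MeasureTheory

lemma tendsto_of_eventually_mem_Icc {α : Type*} {l : Filter α} {f : α → ℝ} {lo hi : ℝ → ℝ}
    {c : ℝ} (hlo : Tendsto lo (𝓝[>] 0) (𝓝 c)) (hhi : Tendsto hi (𝓝[>] 0) (𝓝 c))
    (h : ∀ᶠ η in 𝓝[>] 0, ∀ᶠ x in l, f x ∈ Icc (lo η) (hi η)) : Tendsto f l (𝓝 c) := by
  refine tendsto_order.2 ⟨fun b hb => ?_, fun b hb => ?_⟩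
  · obtain ⟨η, hη, hbη⟩ := (h.and (hlo.eventually (lt_mem_nhds hb))).exists
    filter_upwards [hη] with x hx using hbη.trans_le hx.1
  · obtain ⟨η, hη, hbη⟩ := (h.and (hhi.eventually (gt_mem_nhds hb))).exists
    filter_upwards [hη] with x hx using hx.2.trans_lt hbη

section Primitive

variable {a : ℝ → ℝ} {b η : ℝ}

lemma continuousOn_primitive_Icc (hb : 0 ≤ b) (ha : ContinuousOn a (Icc 0 b)) :
    ContinuousOn (fun y => ∫ x in (0:ℝ)..y, a x) (Icc 0 b) := by
  simpa [uIcc_of_le hb] using continuousOn_primitive_interval (μ := volume) (a := 0) (b := b)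
    (f := a) (by rw [uIcc_of_le hb]; exact ha.integrableOn_Icc)

lemma monotoneOn_primitive_of_nonneg (ha : ContinuousOn a (Ici 0))
    (hpos : ∀ x ∈ Ico 0 b, 0 ≤ a x) :
    MonotoneOn (fun y => ∫ x in (0:ℝ)..y, a x) (Ico 0 b) := fun _ hu _ hv huv =>
  integral_mono_interval le_rfl hu.1 huv
    (ae_restrict_of_forall_mem measurableSet_Ioc fun x hx =>
      hpos x ⟨hx.1.le, hx.2.trans_lt hv.2⟩)
    ((ha.mono Icc_subset_Ici_self).intervalIntegrable_of_Icc hv.1)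

lemma exists_primitive_linear_bounds (ha : ContinuousOn a (Ici 0)) (hb : 0 < b) (hη : 0 < η) :
    ∃ r ∈ Ioo 0 b, ∀ y ∈ Icc 0 r,
      (a 0 - η) * y ≤ ∫ x in (0:ℝ)..y, a x ∧ ∫ x in (0:ℝ)..y, a x ≤ (a 0 + η) * y := by
  have hnear : ∀ᶠ x in 𝓝[≥] 0, x < b ∧ a x ∈ Icc (a 0 - η) (a 0 + η) :=
    (eventually_nhdsWithin_of_eventually_nhds (eventually_lt_nhds hb)).and
      (ha 0 self_mem_Ici (Icc_mem_nhds (by linarith) (by linarith)))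
  obtain ⟨r, hr, hsub⟩ := mem_nhdsGE_iff_exists_Icc_subset.1 hnear
  refine ⟨r, ⟨hr, (hsub ⟨hr.le, le_rfl⟩).1⟩, fun y hy => ?_⟩
  have hint := (ha.mono Icc_subset_Ici_self).intervalIntegrable_of_Icc (μ := volume) hy.1
  have hbound : ∀ x ∈ Icc 0 y, a x ∈ Icc (a 0 - η) (a 0 + η) :=
    fun x hx => (hsub ⟨hx.1, hx.2.trans hy.2⟩).2
  have hconst (c : ℝ) : ∫ _ in (0:ℝ)..y, c = c * y := by
    rw [intervalIntegral.integral_const, smul_eq_mul, sub_zero, mul_comm]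
  constructor
  · rw [← hconst]
    exact integral_mono_on hy.1 intervalIntegrable_const hint fun x hx => (hbound x hx).1
  · rw [← hconst]
    exact integral_mono_on hy.1 hint intervalIntegrable_const fun x hx => (hbound x hx).2

end Primitive

lemma integral_exp_neg_mul {c : ℝ} (hc : c ≠ 0) (L : ℝ) :
    ∫ y in (0:ℝ)..L, exp (-(c * y)) = (1 - exp (-(c * L))) / c := by
  simp only [← neg_mul]
  rw [integral_comp_mul_left (fun y => exp y) (neg_ne_zero.2 hc), integral_exp]
  simp only [mul_zero, exp_zero, smul_eq_mul, neg_mul]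
  field_simp
  ring

section Laplace

variable {A : ℝ → ℝ} {c t r δ : ℝ}

lemma intervalIntegrable_exp_neg_mul (hA : ContinuousOn A (Icc 0 δ)) {u v : ℝ}
    (hu : u ∈ Icc 0 δ) (hv : v ∈ Icc 0 δ) :
    IntervalIntegrable (fun y => exp (-t * A y)) volume u v :=
  ((continuous_exp.comp_continuousOn (continuousOn_const.mul hA)).mono
    (uIcc_subset_Icc hu hv)).intervalIntegrable

lemma le_integral_exp_neg_mul (hc : 0 < c) (ht : 0 < t) (hr : 0 ≤ r) (hδ : 0 ≤ δ)
    (hA : ContinuousOn A (Icc 0 δ)) (hAr : ∀ y ∈ Icc 0 r, A y ≤ c * y) :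
    (1 - exp (-(t * c * min r δ))) / (t * c) ≤ ∫ y in (0:ℝ)..δ, exp (-t * A y) := by
  set m := min r δ
  have hm : m ∈ Icc 0 δ := ⟨le_min hr hδ, min_le_right _ _⟩
  calc (1 - exp (-(t * c * m))) / (t * c) = ∫ y in (0:ℝ)..m, exp (-(t * c * y)) :=
        (integral_exp_neg_mul (by positivity) m).symm
    _ ≤ ∫ y in (0:ℝ)..m, exp (-t * A y) := by
        have hexp : Continuous fun y => exp (-(t * c * y)) := by fun_prop
        refine integral_mono_on hm.1 (hexp.intervalIntegrable _ _)
          (intervalIntegrable_exp_neg_mul hA ⟨le_rfl, hδ⟩ hm) fun y hy => ?_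
        exact exp_le_exp.2 (by nlinarith [hAr y ⟨hy.1, hy.2.trans (min_le_left _ _)⟩])
    _ ≤ ∫ y in (0:ℝ)..δ, exp (-t * A y) :=
        integral_mono_interval le_rfl hm.1 hm.2 (Eventually.of_forall fun _ => (exp_pos _).le)
          (intervalIntegrable_exp_neg_mul hA ⟨le_rfl, hδ⟩ ⟨hδ, le_rfl⟩)

lemma integral_exp_neg_mul_le_of_mul_le (hc : 0 < c) (ht : 0 < t) (hr : 0 ≤ r)
    (hA : ContinuousOn A (Icc 0 r)) (hAr : ∀ y ∈ Icc 0 r, c * y ≤ A y) :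
    ∫ y in (0:ℝ)..r, exp (-t * A y) ≤ 1 / (t * c) :=
  calc ∫ y in (0:ℝ)..r, exp (-t * A y) ≤ ∫ y in (0:ℝ)..r, exp (-(t * c * y)) := by
        have hexp : Continuous fun y => exp (-(t * c * y)) := by fun_prop
        refine integral_mono_on hr (intervalIntegrable_exp_neg_mul hA ⟨le_rfl, hr⟩ ⟨hr, le_rfl⟩)
          (hexp.intervalIntegrable _ _) fun y hy => ?_
        exact exp_le_exp.2 (by nlinarith [hAr y hy])
    _ = (1 - exp (-(t * c * r))) / (t * c) := integral_exp_neg_mul (by positivity) r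
    _ ≤ 1 / (t * c) := by gcongr; linarith [exp_pos (-(t * c * r))]

lemma integral_exp_neg_mul_le_of_le (ht : 0 ≤ t) (hr : 0 ≤ r) (hrδ : r ≤ δ)
    (hA : ContinuousOn A (Icc 0 δ)) (hAr : ∀ y ∈ Icc r δ, A r ≤ A y) :
    ∫ y in r..δ, exp (-t * A y) ≤ (δ - r) * exp (-t * A r) :=
  calc ∫ y in r..δ, exp (-t * A y) ≤ ∫ _ in r..δ, exp (-t * A r) := by
        refine integral_mono_on hrδ
          (intervalIntegrable_exp_neg_mul hA ⟨hr, hrδ⟩ ⟨hr.trans hrδ, le_rfl⟩)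
          intervalIntegrable_const fun y hy => ?_
        exact exp_le_exp.2 (by nlinarith [hAr y hy])
    _ = (δ - r) * exp (-t * A r) := by simp

lemma integral_exp_neg_mul_le (hc : 0 < c) (ht : 0 < t) (hr : 0 ≤ r) (hδ : 0 ≤ δ)
    (hA : ContinuousOn A (Icc 0 δ)) (hAlin : ∀ y ∈ Icc 0 r, c * y ≤ A y)
    (hAr : ∀ y ∈ Icc r δ, A r ≤ A y) :
    ∫ y in (0:ℝ)..δ, exp (-t * A y) ≤ 1 / (t * c) + δ * exp (-t * A r) := by
  rcases le_total r δ with hrδ | hδr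
  · rw [← integral_add_adjacent_intervals
      (intervalIntegrable_exp_neg_mul hA ⟨le_rfl, hδ⟩ ⟨hr, hrδ⟩)
      (intervalIntegrable_exp_neg_mul hA ⟨hr, hrδ⟩ ⟨hδ, le_rfl⟩)]
    gcongr ?_ + ?_
    · exact integral_exp_neg_mul_le_of_mul_le hc ht hr (hA.mono (Icc_subset_Icc_right hrδ)) hAlin
    · exact (integral_exp_neg_mul_le_of_le ht.le hr hrδ hA hAr).trans
        (by gcongr; linarith)
  · calc ∫ y in (0:ℝ)..δ, exp (-t * A y) ≤ 1 / (t * c) :=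
          integral_exp_neg_mul_le_of_mul_le hc ht hδ hA fun y hy => hAlin y ⟨hy.1, hy.2.trans hδr⟩
      _ ≤ 1 / (t * c) + δ * exp (-t * A r) := le_add_of_nonneg_right (by positivity)

end Laplace

lemma tendsto_exp_neg_mul_min {δ : ℝ → ℝ} {c r : ℝ} (hc : 0 < c) (hr : 0 < r)
    (hδ : ∀ᶠ ε in 𝓝[>] 0, 0 < δ ε) (hratio : Tendsto (fun ε => ε / δ ε) (𝓝[>] 0) (𝓝 0)) :
    Tendsto (fun ε => exp (-(1 / (2 * ε) * c * min r (δ ε)))) (𝓝[>] 0) (𝓝 0) := by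
  have hδ_div : Tendsto (fun ε => δ ε / ε) (𝓝[>] 0) atTop := by
    have hpos : ∀ᶠ ε in 𝓝[>] (0:ℝ), ε / δ ε ∈ Ioi 0 := by
      filter_upwards [self_mem_nhdsWithin, hδ] with ε hε hδε using div_pos hε hδε
    simpa only [Pi.inv_def, inv_div] using
      (tendsto_nhdsWithin_iff.2 ⟨hratio, hpos⟩).inv_tendsto_nhdsGT_zero
  have hr_div : Tendsto (fun ε => r / ε) (𝓝[>] 0) atTop := by
    simpa [div_eq_mul_inv] using tendsto_inv_nhdsGT_zero.const_mul_atTop hr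
  have hmin : Tendsto (fun ε => min r (δ ε) / ε) (𝓝[>] 0) atTop := by
    refine tendsto_atTop.2 fun B => ?_
    filter_upwards [self_mem_nhdsWithin, tendsto_atTop.1 hr_div B, tendsto_atTop.1 hδ_div B]
      with ε hε h₁ h₂
    rw [← min_div_div_right hε.le]
    exact le_min h₁ h₂
  refine (tendsto_exp_neg_atTop_nhds_zero.comp (hmin.const_mul_atTop (half_pos hc))).congr
    fun ε => ?_
  simp only [Function.comp]
  ring_nf

lemma tendsto_one_div_two_mul_mul_exp_neg {K : ℝ} (hK : 0 < K) :
    Tendsto (fun ε => 1 / (2 * ε) * exp (-(1 / (2 * ε)) * K)) (𝓝[>] 0) (𝓝 0) := by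
  have ht : Tendsto (fun ε : ℝ => 1 / (2 * ε)) (𝓝[>] 0) atTop := by
    refine (tendsto_inv_nhdsGT_zero.atTop_div_const two_pos).congr fun ε => ?_
    ring
  refine ((tendsto_rpow_mul_exp_neg_mul_atTop_nhds_zero 1 K hK).comp ht).congr fun ε => ?_
  simp only [Function.comp, rpow_one]
  ring_nf

lemma div_mem_Icc_of_laplace_bounds {a₀ η ε I E D e : ℝ} (ha₀ : 0 < a₀) (hη : 0 < η)
    (hε : 0 < ε)
    (hlow : (1 - E) / (1 / (2 * ε) * (a₀ + η)) ≤ I) (hE : E ≤ η)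
    (hup : I ≤ 1 / (1 / (2 * ε) * (a₀ - η)) + D * e) (he : a₀ * D * (1 / (2 * ε) * e) ≤ η) :
    I / (2 * ε / a₀) ∈ Icc (a₀ * (1 - η) / (a₀ + η)) (a₀ / (a₀ - η) + η) := by
  have hI : I / (2 * ε / a₀) = a₀ * (1 / (2 * ε)) * I := by field_simp
  have hlow' : a₀ * (1 - E) / (a₀ + η) ≤ a₀ * (1 / (2 * ε)) * I := by
    calc a₀ * (1 - E) / (a₀ + η)
          = a₀ * (1 / (2 * ε)) * ((1 - E) / (1 / (2 * ε) * (a₀ + η))) := by field_simp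
      _ ≤ _ := by gcongr
  have hup' : a₀ * (1 / (2 * ε)) * I ≤ a₀ / (a₀ - η) + a₀ * D * (1 / (2 * ε) * e) := by
    calc a₀ * (1 / (2 * ε)) * I
          ≤ a₀ * (1 / (2 * ε)) * (1 / (1 / (2 * ε) * (a₀ - η)) + D * e) := by gcongr
      _ = a₀ / (a₀ - η) + a₀ * D * (1 / (2 * ε) * e) := by
          field_simp
  rw [hI]
  constructor
  · refine le_trans ?_ hlow'
    gcongr
  · linarith

lemma tendsto_mul_one_sub_div_add {a₀ : ℝ} (ha₀ : 0 < a₀) :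
    Tendsto (fun η => a₀ * (1 - η) / (a₀ + η)) (𝓝[>] 0) (𝓝 1) := by
  have : ContinuousAt (fun η => a₀ * (1 - η) / (a₀ + η)) 0 := by
    fun_prop (disch := simp [ha₀.ne'])
  simpa [ha₀.ne'] using this.tendsto.mono_left nhdsWithin_le_nhds

lemma tendsto_div_sub_add {a₀ : ℝ} (ha₀ : 0 < a₀) :
    Tendsto (fun η => a₀ / (a₀ - η) + η) (𝓝[>] 0) (𝓝 1) := by
  have : ContinuousAt (fun η => a₀ / (a₀ - η) + η) 0 := by
    fun_prop (disch := simp [ha₀.ne'])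
  simpa [ha₀.ne'] using this.tendsto.mono_left nhdsWithin_le_nhds

theorem stmt10_general (a : ℝ → ℝ)
    (hcont : ContinuousOn a (Set.Ici 0))
    (ha0 : 0 < a 0)
    (δbar : ℝ) (hδbar_pos : 0 < δbar)
    (hapos : ∀ x, 0 ≤ x → x < δbar → 0 < a x)
    (εbar : ℝ) (hεbar : 0 < εbar)
    (δf : ℝ → ℝ) (hδf : ∀ ε, 0 < ε → ε < εbar → δf ε ∈ Set.Ioo 0 δbar)
    (hratio : Filter.Tendsto (fun ε => ε / δf ε) (nhdsWithin 0 (Set.Ioi 0)) (nhds 0)) :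
    Filter.Tendsto
      (fun ε => (∫ y in (0:ℝ)..δf ε, Real.exp (-(1 / (2 * ε)) * ∫ x in (0:ℝ)..y, a x))
        / (2 * ε / a 0))
      (nhdsWithin 0 (Set.Ioi 0)) (nhds 1) := by
  set A : ℝ → ℝ := fun y => ∫ x in (0:ℝ)..y, a x
  have hAcont : ContinuousOn A (Icc 0 δbar) :=
    continuousOn_primitive_Icc hδbar_pos.le (hcont.mono Icc_subset_Ici_self)
  have hAmono : MonotoneOn A (Ico 0 δbar) :=
    monotoneOn_primitive_of_nonneg hcont fun x hx => (hapos x hx.1 hx.2).le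
  have hδ : ∀ᶠ ε in 𝓝[>] 0, 0 < ε ∧ δf ε ∈ Ioo 0 δbar := by
    filter_upwards [self_mem_nhdsWithin,
      eventually_nhdsWithin_of_eventually_nhds (eventually_lt_nhds hεbar)] with ε hε hεb
    exact ⟨hε, hδf ε hε hεb⟩
  refine tendsto_of_eventually_mem_Icc (tendsto_mul_one_sub_div_add ha0)
    (tendsto_div_sub_add ha0) ?_
  filter_upwards [Ioo_mem_nhdsGT ha0] with η ⟨hη, hηa⟩
  obtain ⟨r, ⟨hr, hrδ⟩, hAlin⟩ := exists_primitive_linear_bounds hcont hδbar_pos hη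
  have hAr : 0 < A r := by nlinarith [(hAlin r ⟨hr.le, le_rfl⟩).1]
  have hE := (tendsto_exp_neg_mul_min (by linarith : 0 < a 0 + η) hr
    (hδ.mono fun ε h => h.2.1) hratio).eventually (ge_mem_nhds hη)
  have hT := ((tendsto_one_div_two_mul_mul_exp_neg hAr).const_mul (a 0 * δbar)).eventually
    (ge_mem_nhds (show a 0 * δbar * 0 < η by rwa [mul_zero]))
  filter_upwards [hδ, hE, hT] with ε ⟨hε, hδ0, hδb⟩ hEε hTε
  have hAδ : ContinuousOn A (Icc 0 (δf ε)) := hAcont.mono (Icc_subset_Icc_right hδb.le)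
  have ht : 0 < 1 / (2 * ε) := by positivity
  have hlow := le_integral_exp_neg_mul (c := a 0 + η) (by linarith) ht hr.le hδ0.le hAδ
    fun y hy => (hAlin y hy).2
  have hup := integral_exp_neg_mul_le (c := a 0 - η) (by linarith) ht hr.le hδ0.le hAδ
    (fun y hy => (hAlin y hy).1)
    fun y hy => hAmono ⟨hr.le, hrδ⟩ ⟨hr.le.trans hy.1, hy.2.trans_lt hδb⟩ hy.1
  exact div_mem_Icc_of_laplace_bounds ha0 hη hε hlow hEε (hup.trans (by gcongr)) hTε

theorem stmt10 (a : ℝ → ℝ)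
    (hbdd : ∃ M : ℝ, ∀ x, 0 ≤ x → |a x| ≤ M)
    (hcont : ContinuousOn a (Set.Ici 0))
    (ha0 : 0 < a 0)
    (δbar : ℝ) (hδbar_pos : 0 < δbar) (hδbar_le : δbar ≤ 1)
    (hapos : ∀ x, 0 ≤ x → x < δbar → 0 < a x)
    (εbar : ℝ) (hεbar : 0 < εbar)
    (δf : ℝ → ℝ) (hδf : ∀ ε, 0 < ε → ε < εbar → δf ε ∈ Set.Ioo 0 δbar)
    (hratio : Filter.Tendsto (fun ε => ε / δf ε) (nhdsWithin 0 (Set.Ioi 0)) (nhds 0)) :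
    Filter.Tendsto
      (fun ε => (∫ y in (0:ℝ)..δf ε, Real.exp (-(1 / (2 * ε)) * ∫ x in (0:ℝ)..y, a x))
        / (2 * ε / a 0))
      (nhdsWithin 0 (Set.Ioi 0)) (nhds 1) :=
  stmt10_general a hcont ha0 δbar hδbar_pos hapos εbar hεbar δf hδf hratio
end
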